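/- Let A be a unital complex Banach algebra, τ : A → F continuous tracial linear, and u ∈ A with ‖u - 1‖ < 1 and ‖u⁻¹ - 1‖ < 1 (u invertible). Then L_τ(u⁻¹) = -L_τ(u), where L_τ(w) = (1/(2πi))τ(log w). -/

import Mathlib

/-- The logarithm defined by the power series centered at 1. -/
noncomputable def blog {A : Type*} [NormedRing A] [NormedAlgebra ℂ A] (u : A) : A :=
  -∑' n : ℕ, ((n : ℂ) + 1)⁻¹ • (1 - u) ^ (n + 1)

/-- `L_τ(u) = (1/(2πi)) τ(log u)`. -/
noncomputable def Ltau {A F : Type*} [NormedRing A] [NormedAlgebra ℂ A]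
    [NormedAddCommGroup F] [NormedSpace ℂ F] (τ : A →L[ℂ] F) (u : A) : F :=
  (2 * (Real.pi : ℂ) * Complex.I)⁻¹ • τ (blog u)

/-!
Write `L a = ∑ aⁿ⁺¹ / (n + 1)`, so that `blog w = -L (1 - w)`. The elements `x = 1 - u` and
`y = 1 - u⁻¹` commute and satisfy `x + y = x y`, hence `(1 - t x)(1 - t y) = 1 - (t - t²) x y`
for every scalar `t`. Differentiating term by term, `t ↦ L (t a)` has derivative
`a (1 - t a)⁻¹`, and this identity makes the derivative of
`G t = L (t x) + L (t y) - L ((t - t²) x y)` vanish on a disc around `[0, 1]`.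
So `L x + L y = G 1 = G 0 = 0`, i.e. `blog u⁻¹ = -blog u`, and `L_τ` inherits this by linearity.
-/

open Metric
open scoped Ring

theorem Ring.mul_inverse_add_mul_inverse {R : Type*} [Ring R] {p q : R} (x y : R)
    (hp : IsUnit p) (hq : IsUnit q) (hpq : Commute p q) :
    x * p⁻¹ʳ + y * q⁻¹ʳ = (x * q + y * p) * (p * q)⁻¹ʳ := by
  have hx : x * q * (p * q)⁻¹ʳ = x * p⁻¹ʳ := by
    rw [Ring.mul_inverse_rev' hpq, mul_assoc, ← mul_assoc q, Ring.mul_inverse_cancel q hq, one_mul]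
  have hy : y * p * (p * q)⁻¹ʳ = y * q⁻¹ʳ := by
    rw [hpq.eq, Ring.mul_inverse_rev' hpq.symm, mul_assoc, ← mul_assoc p,
      Ring.mul_inverse_cancel p hp, one_mul]
  rw [add_mul, hx, hy]

theorem exists_lt_and_mul_lt_one {a b : ℝ} (h : a * b < 1) : ∃ c, a < c ∧ c * b < 1 :=
  ((frequently_gt_nhds a).and_eventually
    (((continuous_id.mul continuous_const).tendsto a).eventually_lt_const h)).exists

section NegLogOneSub

variable (𝕜 : Type*) [RCLike 𝕜] {A : Type*} [NormedRing A] [NormedAlgebra 𝕜 A]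

noncomputable def negLogOneSub (a : A) : A :=
  ∑' n : ℕ, ((n : 𝕜) + 1)⁻¹ • a ^ (n + 1)

@[simp]
theorem negLogOneSub_zero : negLogOneSub 𝕜 (0 : A) = 0 := by
  simp [negLogOneSub]

variable {𝕜} [CompleteSpace A]

theorem hasDerivAt_negLogOneSub_smul (a : A) {t : 𝕜} (ht : ‖t‖ * ‖a‖ < 1) :
    HasDerivAt (fun s : 𝕜 => negLogOneSub 𝕜 (s • a)) (a * (1 - t • a)⁻¹ʳ) t := by
  obtain ⟨ρ, htρ, hρa⟩ := exists_lt_and_mul_lt_one ht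
  have hρ : 0 < ρ := (norm_nonneg t).trans_lt htρ
  have hterm (n : ℕ) (s : 𝕜) : HasDerivAt (fun s : 𝕜 => ((n : 𝕜) + 1)⁻¹ • (s • a) ^ (n + 1))
      (s ^ n • a ^ (n + 1)) s := by
    simp_rw [smul_pow, smul_smul]
    refine ((hasDerivAt_pow (n + 1) s).const_mul _).smul_const _ |>.congr_deriv ?_
    have : (n : 𝕜) + 1 ≠ 0 := by exact_mod_cast n.succ_ne_zero
    congr 1
    push_cast
    field_simp
  have hbound (n : ℕ) (s : 𝕜) (hs : s ∈ ball 0 ρ) :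
      ‖s ^ n • a ^ (n + 1)‖ ≤ ‖a‖ * (ρ * ‖a‖) ^ n := by
    rw [mem_ball_zero_iff] at hs
    calc ‖s ^ n • a ^ (n + 1)‖ ≤ ‖s‖ ^ n * ‖a‖ ^ (n + 1) :=
          (norm_smul_le _ _).trans (by rw [norm_pow]; gcongr; exact norm_pow_le' a n.succ_pos)
      _ ≤ ρ ^ n * ‖a‖ ^ (n + 1) := by gcongr
      _ = ‖a‖ * (ρ * ‖a‖) ^ n := by ring
  have hsum : HasSum (fun n => t ^ n • a ^ (n + 1)) (a * (1 - t • a)⁻¹ʳ) := by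
    have hterm_eq : (fun n : ℕ => t ^ n • a ^ (n + 1)) = fun n => a * (t • a) ^ n := by
      ext n
      rw [smul_pow, mul_smul_comm, pow_succ']
    rw [hterm_eq]
    exact (hasSum_geom_series_inverse _ ((norm_smul_le t a).trans_lt ht)).mul_left a
  rw [← hsum.tsum_eq]
  exact hasDerivAt_tsum_of_isPreconnected
    ((summable_geometric_of_lt_one (by positivity) hρa).mul_left _) isOpen_ball
    (convex_ball _ _).isPreconnected (fun n s _ => hterm n s) hbound (mem_ball_self hρ)
    (by simp) (mem_ball_zero_iff.2 htρ)

theorem hasDerivAt_negLogOneSub_combination_zero {x y : A} (hxy : Commute x y)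
    (hrel : x + y = x * y) {t : 𝕜} (hxt : ‖t‖ * ‖x‖ < 1) (hyt : ‖t‖ * ‖y‖ < 1)
    (hwt : ‖t - t ^ 2‖ * ‖x * y‖ < 1) :
    HasDerivAt (fun s : 𝕜 => negLogOneSub 𝕜 (s • x) + negLogOneSub 𝕜 (s • y) -
      negLogOneSub 𝕜 ((s - s ^ 2) • (x * y))) 0 t := by
  have hp : IsUnit (1 - t • x) := isUnit_one_sub_of_norm_lt_one ((norm_smul_le t x).trans_lt hxt)
  have hq : IsUnit (1 - t • y) := isUnit_one_sub_of_norm_lt_one ((norm_smul_le t y).trans_lt hyt)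
  have hpq : Commute (1 - t • x) (1 - t • y) :=
    (Commute.one_left _).sub_left ((Commute.one_right _).sub_right ((hxy.smul_left t).smul_right t))
  have hprod : (1 - t • x) * (1 - t • y) = 1 - (t - t ^ 2) • (x * y) :=
    calc (1 - t • x) * (1 - t • y) = 1 - t • (x + y) + (t • x) * (t • y) := by
          rw [sub_mul, one_mul, mul_sub, mul_one, smul_add]; abel
      _ = 1 - (t - t ^ 2) • (x * y) := by
          rw [hrel, smul_mul_smul_comm, ← sq, sub_smul]; abel
  have hnum : x * (1 - t • y) + y * (1 - t • x) = (1 - 2 * t) • (x * y) :=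
    calc x * (1 - t • y) + y * (1 - t • x) = (x + y) - (t • (x * y) + t • (y * x)) := by
          rw [mul_sub, mul_sub, mul_one, mul_one, mul_smul_comm, mul_smul_comm]; abel
      _ = (1 - 2 * t) • (x * y) := by
          rw [hrel, ← hxy.eq, sub_smul, one_smul, two_mul, add_smul]
  have hw := (hasDerivAt_negLogOneSub_smul (x * y) hwt).scomp t
    ((hasDerivAt_id t).sub (hasDerivAt_pow 2 t))
  refine (((hasDerivAt_negLogOneSub_smul x hxt).add
    (hasDerivAt_negLogOneSub_smul y hyt)).sub hw).congr_deriv ?_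
  rw [Ring.mul_inverse_add_mul_inverse x y hp hq hpq, hprod, hnum]
  simp

theorem negLogOneSub_add_negLogOneSub_eq_zero {x y : A} (hxy : Commute x y) (hx : ‖x‖ < 1)
    (hy : ‖y‖ < 1) (hrel : x + y = x * y) : negLogOneSub 𝕜 x + negLogOneSub 𝕜 y = 0 := by
  obtain ⟨c, hc, hcxy⟩ := exists_lt_and_mul_lt_one (a := 1) (b := max ‖x‖ ‖y‖)
    (by simpa using max_lt hx hy)
  have hcx : c * ‖x‖ < 1 := (mul_le_mul_of_nonneg_left (le_max_left _ _) (by linarith)).trans_lt hcxy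
  have hcy : c * ‖y‖ < 1 :=
    (mul_le_mul_of_nonneg_left (le_max_right _ _) (by linarith)).trans_lt hcxy
  set U : Set 𝕜 := ball 2⁻¹ (c - 2⁻¹)
  have hU (t : 𝕜) (ht : t ∈ U) : ‖t‖ < c ∧ ‖1 - t‖ < c := by
    rw [mem_ball, dist_eq_norm] at ht
    have h2 : ‖(2⁻¹ : 𝕜)‖ = 2⁻¹ := by simp
    constructor
    · calc ‖t‖ = ‖(t - 2⁻¹) + 2⁻¹‖ := by rw [sub_add_cancel]
        _ ≤ ‖t - 2⁻¹‖ + ‖(2⁻¹ : 𝕜)‖ := norm_add_le _ _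
        _ < c := by linarith
    · calc ‖1 - t‖ = ‖2⁻¹ - (t - 2⁻¹)‖ := by congr 1; ring
        _ ≤ ‖(2⁻¹ : 𝕜)‖ + ‖t - 2⁻¹‖ := norm_sub_le _ _
        _ < c := by linarith
  have hU₀ : (0 : 𝕜) ∈ U := by rw [mem_ball, dist_eq_norm]; norm_num; linarith
  have hU₁ : (1 : 𝕜) ∈ U := by rw [mem_ball, dist_eq_norm]; norm_num; linarith
  have hG (t : 𝕜) (ht : t ∈ U) := by
    obtain ⟨ht₀, ht₁⟩ := hU t ht
    refine hasDerivAt_negLogOneSub_combination_zero hxy hrel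
      ((mul_le_mul_of_nonneg_right ht₀.le (norm_nonneg x)).trans_lt hcx)
      ((mul_le_mul_of_nonneg_right ht₀.le (norm_nonneg y)).trans_lt hcy) ?_
    calc ‖t - t ^ 2‖ * ‖x * y‖ ≤ (‖t‖ * ‖1 - t‖) * (‖x‖ * ‖y‖) := by
          rw [← norm_mul, show t * (1 - t) = t - t ^ 2 by ring]
          gcongr
          exact norm_mul_le x y
      _ ≤ (c * c) * (‖x‖ * ‖y‖) := by gcongr
      _ = (c * ‖x‖) * (c * ‖y‖) := by ring
      _ < 1 := mul_lt_one_of_nonneg_of_lt_one_left (by positivity) hcx hcy.le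
  have hGconst := isOpen_ball.is_const_of_deriv_eq_zero (convex_ball _ _).isPreconnected
    (fun t ht => (hG t ht).differentiableAt.differentiableWithinAt)
    (fun t ht => (hG t ht).deriv) hU₀ hU₁
  simpa using hGconst.symm

end NegLogOneSub

theorem blog_eq_neg_negLogOneSub {A : Type*} [NormedRing A] [NormedAlgebra ℂ A] (u : A) :
    blog u = -negLogOneSub ℂ (1 - u) :=
  rfl

theorem blog_units_inv {A : Type*} [NormedRing A] [NormedAlgebra ℂ A] [CompleteSpace A] (u : Aˣ)
    (hu : ‖(u : A) - 1‖ < 1) (hu' : ‖(↑u⁻¹ : A) - 1‖ < 1) : blog (↑u⁻¹ : A) = -blog (u : A) := by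
  have hcomm : Commute (1 - (u : A)) (1 - ↑u⁻¹) :=
    (Commute.one_left _).sub_left ((Commute.one_right _).sub_right (Commute.refl _).units_inv_right)
  have hrel : (1 - (u : A)) + (1 - ↑u⁻¹) = (1 - u) * (1 - ↑u⁻¹) := by
    rw [sub_mul, one_mul, mul_sub, mul_one, u.mul_inv]; abel
  have hsum := negLogOneSub_add_negLogOneSub_eq_zero (𝕜 := ℂ) hcomm
    (by rwa [norm_sub_rev]) (by rwa [norm_sub_rev]) hrel
  rw [blog_eq_neg_negLogOneSub, blog_eq_neg_negLogOneSub, neg_neg]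
  exact neg_eq_of_add_eq_zero_left hsum

theorem Ltau_inv_general {A F : Type*} [NormedRing A] [NormedAlgebra ℂ A] [CompleteSpace A]
    [NormedAddCommGroup F] [NormedSpace ℂ F]
    (τ : A →L[ℂ] F)
    (u : Aˣ) (hu : ‖(u : A) - 1‖ < 1) (hu' : ‖(↑u⁻¹ : A) - 1‖ < 1) :
    Ltau τ (↑u⁻¹ : A) = -Ltau τ (u : A) := by
  rw [Ltau, Ltau, blog_units_inv u hu hu', map_neg, smul_neg]

/-- If `u` is invertible with `‖u - 1‖ < 1` and `‖u⁻¹ - 1‖ < 1`, then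
`L_τ(u⁻¹) = -L_τ(u)`. -/
theorem Ltau_inv {A F : Type*} [NormedRing A] [NormedAlgebra ℂ A] [CompleteSpace A]
    [NormedAddCommGroup F] [NormedSpace ℂ F] [CompleteSpace F]
    (τ : A →L[ℂ] F) (htr : ∀ x y : A, τ (x * y) = τ (y * x))
    (u : Aˣ) (hu : ‖(u : A) - 1‖ < 1) (hu' : ‖(↑u⁻¹ : A) - 1‖ < 1) :
    Ltau τ (↑u⁻¹ : A) = -Ltau τ (u : A) :=
  Ltau_inv_general τ u hu hu'
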